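/- Lemma 2.5 (continuity of tail integrals along sequences). Let n ≥ 1, q > 1, s ∈ (0,1) and δ₁ > 0. Let u : ℝⁿ → ℝ be measurable with ∫_{ℝⁿ} |u(y)|^{q−1}/(1 + |y|^{n+sq}) dy < ∞. Let (x_k) be a sequence in ℝⁿ with x_k → x̄ and u(x_k) → u(x̄) as k → ∞. Then each of the integrals ∫_{|z| ≥ δ₁} J_q(u(x_k) − u(x_k+z)) |z|^{−(n+sq)} dz and ∫_{|z| ≥ δ₁} J_q(u(x̄) − u(x̄+z)) |z|^{−(n+sq)} dz is absolutely convergent, and ∫_{|z| ≥ δ₁} J_q(u(x_k) − u(x_k+z)) |z|^{−(n+sq)} dz → ∫_{|z| ≥ δ₁} J_q(u(x̄) − u(x̄+z)) |z|^{−(n+sq)} dz as k → ∞. -/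

import Mathlib

open MeasureTheory Metric Filter Topology

noncomputable section

/-- `J_q(t) = |t|^{q-2} t`. -/
def Jq (q t : ℝ) : ℝ := |t| ^ (q - 2) * t

/-!
After the substitution `y = x + z` the tail integral centred at `x` is the integral over `ℝⁿ` of
`1_{|y - x| ≥ δ₁} J_q(u(x) - u(y)) |y - x|^{-(n+sq)}`, in which `u` is evaluated only at the centre
and at the integration variable. As `x_k → x̄` and `u(x_k) → u(x̄)` this integrand converges off the
null sphere `|y - x̄| = δ₁`, and for bounded centres it is dominated by a multiple of
`(1 + |u(y)|^{q-1}) / (1 + |y|^{n+sq})`, integrable since `n + sq > n`. Dominated convergence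
concludes.
-/

lemma abs_Jq {q : ℝ} (hq : q ≠ 1) (t : ℝ) : |Jq q t| = |t| ^ (q - 1) := by
  rcases eq_or_ne t 0 with rfl | ht
  · simp [Jq, Real.zero_rpow (sub_ne_zero.2 hq)]
  · rw [Jq, abs_mul, abs_of_nonneg (Real.rpow_nonneg (abs_nonneg t) _),
      ← Real.rpow_add_one (abs_ne_zero.2 ht)]
    ring_nf

lemma continuous_Jq {q : ℝ} (hq : 1 < q) : Continuous (Jq q) := by
  refine continuous_iff_continuousAt.2 fun t => ?_
  rcases eq_or_ne t 0 with rfl | ht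
  · have hq' : 0 < q - 1 := sub_pos.2 hq
    have hlim : Tendsto (fun t : ℝ => |t| ^ (q - 1)) (𝓝 0) (𝓝 0) := by
      simpa [Real.zero_rpow hq'.ne'] using
        ((continuous_abs.rpow_const fun _ => Or.inr hq'.le).tendsto (0 : ℝ))
    rw [ContinuousAt, show Jq q 0 = 0 by simp [Jq]]
    exact squeeze_zero_norm (fun t => (abs_Jq hq.ne' t).le) hlim
  · exact ((Real.continuousAt_rpow_const _ _ (Or.inl (abs_ne_zero.2 ht))).comp
      continuous_abs.continuousAt).mul continuousAt_id

lemma measurable_Jq (q : ℝ) : Measurable (Jq q) := by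
  unfold Jq; fun_prop

lemma Real.add_rpow_le_two_rpow_mul_rpow_add_rpow {a b r : ℝ} (ha : 0 ≤ a) (hb : 0 ≤ b)
    (hr : 0 ≤ r) : (a + b) ^ r ≤ 2 ^ r * (a ^ r + b ^ r) := calc
  (a + b) ^ r ≤ (2 * max a b) ^ r := by rw [two_mul]; gcongr <;> simp
  _ = 2 ^ r * max a b ^ r := Real.mul_rpow zero_le_two (ha.trans (le_max_left a b))
  _ ≤ 2 ^ r * (a ^ r + b ^ r) := by
    gcongr
    rcases le_total a b with h | h
    · rw [max_eq_right h]; exact le_add_of_nonneg_left (Real.rpow_nonneg ha r)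
    · rw [max_eq_left h]; exact le_add_of_nonneg_right (Real.rpow_nonneg hb r)

lemma abs_sub_rpow_le {a b B r : ℝ} (ha : |a| ≤ B) (hr : 0 ≤ r) :
    |a - b| ^ r ≤ 2 ^ r * (B ^ r + |b| ^ r) := calc
  |a - b| ^ r ≤ (|a| + |b|) ^ r := by gcongr; exact abs_sub _ _
  _ ≤ 2 ^ r * (|a| ^ r + |b| ^ r) :=
    Real.add_rpow_le_two_rpow_mul_rpow_add_rpow (abs_nonneg a) (abs_nonneg b) hr
  _ ≤ 2 ^ r * (B ^ r + |b| ^ r) := by gcongr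

section Tail

variable {E : Type*} [NormedAddCommGroup E]

lemma inv_norm_sub_rpow_le {p δ M : ℝ} (hp : 0 ≤ p) (hδ : 0 < δ) {a y : E} (ha : ‖a‖ ≤ M)
    (hy : δ ≤ ‖y - a‖) :
    (‖y - a‖ ^ p)⁻¹ ≤ (δ ^ (-p) + (1 + M / δ) ^ p) * (1 + ‖y‖ ^ p)⁻¹ := by
  have hM : 0 ≤ M := (norm_nonneg a).trans ha
  have hya : 0 < ‖y - a‖ := hδ.trans_le hy
  have hy_le : ‖y‖ ≤ (1 + M / δ) * ‖y - a‖ := calc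
    ‖y‖ ≤ ‖y - a‖ + ‖a‖ := norm_le_norm_sub_add y a
    _ ≤ ‖y - a‖ + M / δ * ‖y - a‖ := by
      gcongr
      calc ‖a‖ ≤ M / δ * δ := by rwa [div_mul_cancel₀ _ hδ.ne']
        _ ≤ M / δ * ‖y - a‖ := by gcongr
    _ = (1 + M / δ) * ‖y - a‖ := by ring
  have h_one : 1 ≤ δ ^ (-p) * ‖y - a‖ ^ p := by
    rw [Real.rpow_neg hδ.le, inv_mul_eq_div, one_le_div (by positivity)]
    gcongr
  have h_norm : ‖y‖ ^ p ≤ (1 + M / δ) ^ p * ‖y - a‖ ^ p := by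
    rw [← Real.mul_rpow (by positivity) hya.le]
    gcongr
  rw [← div_eq_mul_inv, le_div_iff₀ (by positivity), inv_mul_le_iff₀ (by positivity)]
  linarith

/-- The tail integrand centred at `a` in the variable `y = a + z`, with `u(a)` replaced by a free
parameter `c` so that the centre and its value can converge separately. -/
def tailIntegrand (q p δ : ℝ) (u : E → ℝ) (a : E) (c : ℝ) : E → ℝ :=
  {y | δ ≤ ‖y - a‖}.indicator fun y => Jq q (c - u y) / ‖y - a‖ ^ p

variable {q p δ : ℝ} {u : E → ℝ}

lemma indicator_tail_eq_tailIntegrand_add (a : E) (c : ℝ) :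
    {z : E | δ ≤ ‖z‖}.indicator (fun z => Jq q (c - u (a + z)) / ‖z‖ ^ p) =
      fun z => tailIntegrand q p δ u a c (a + z) := by
  ext z
  simp [tailIntegrand, Set.indicator]

lemma norm_tailIntegrand_le (hq : 1 < q) (hp : 0 ≤ p) (hδ : 0 < δ) {M B : ℝ} {a : E} {c : ℝ}
    (ha : ‖a‖ ≤ M) (hc : |c| ≤ B) (y : E) :
    ‖tailIntegrand q p δ u a c y‖ ≤ 2 ^ (q - 1) * (δ ^ (-p) + (1 + M / δ) ^ p) *
      (B ^ (q - 1) * (1 + ‖y‖ ^ p)⁻¹ + |u y| ^ (q - 1) / (1 + ‖y‖ ^ p)) := by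
  have hB : 0 ≤ B := (abs_nonneg c).trans hc
  have hM : 0 ≤ M := (norm_nonneg a).trans ha
  by_cases hy : δ ≤ ‖y - a‖
  · rw [tailIntegrand, Set.indicator_of_mem (by exact hy), Real.norm_eq_abs, abs_div,
      abs_Jq hq.ne', abs_of_nonneg (by positivity : (0 : ℝ) ≤ ‖y - a‖ ^ p), div_eq_mul_inv]
    calc |c - u y| ^ (q - 1) * (‖y - a‖ ^ p)⁻¹
        ≤ 2 ^ (q - 1) * (B ^ (q - 1) + |u y| ^ (q - 1)) *
          ((δ ^ (-p) + (1 + M / δ) ^ p) * (1 + ‖y‖ ^ p)⁻¹) := by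
          gcongr
          · exact abs_sub_rpow_le hc (sub_pos.2 hq).le
          · exact inv_norm_sub_rpow_le hp hδ ha hy
      _ = _ := by ring
  · rw [tailIntegrand, Set.indicator_of_notMem (by exact hy), norm_zero]
    positivity

lemma tendsto_tailIntegrand {ι : Type*} {l : Filter ι} (hq : 1 < q) (hδ : 0 ≤ δ) {a : ι → E}
    {a₀ : E} {c : ι → ℝ} {c₀ : ℝ} (ha : Tendsto a l (𝓝 a₀)) (hc : Tendsto c l (𝓝 c₀)) {y : E}
    (hy : ‖y - a₀‖ ≠ δ) :
    Tendsto (fun i => tailIntegrand q p δ u (a i) (c i) y) l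
      (𝓝 (tailIntegrand q p δ u a₀ c₀ y)) := by
  have hdist : Tendsto (fun i => ‖y - a i‖) l (𝓝 ‖y - a₀‖) := (tendsto_const_nhds.sub ha).norm
  rcases hy.lt_or_gt with hlt | hgt
  · rw [tailIntegrand, Set.indicator_of_notMem (show y ∉ {y | δ ≤ ‖y - a₀‖} from not_le.2 hlt)]
    refine tendsto_const_nhds.congr' ?_
    filter_upwards [hdist.eventually_lt_const hlt] with i hi
    exact (Set.indicator_of_notMem (show y ∉ {y | δ ≤ ‖y - a i‖} from not_le.2 hi) _).symm
  · rw [tailIntegrand, Set.indicator_of_mem (show y ∈ {y | δ ≤ ‖y - a₀‖} from hgt.le)]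
    have hpos : 0 < ‖y - a₀‖ := hδ.trans_lt hgt
    refine Tendsto.congr' ?_ (((continuous_Jq hq).tendsto _).comp (hc.sub tendsto_const_nhds)
      |>.div (hdist.rpow_const (Or.inl hpos.ne')) (Real.rpow_pos_of_pos hpos p).ne')
    filter_upwards [hdist.eventually_const_lt hgt] with i hi
    exact (Set.indicator_of_mem (show y ∈ {y | δ ≤ ‖y - a i‖} from hi.le)
      fun y => Jq q (c i - u y) / ‖y - a i‖ ^ p).symm

variable [MeasurableSpace E] [BorelSpace E]

lemma measurable_tailIntegrand (hu : Measurable u) (a : E) (c : ℝ) :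
    Measurable (tailIntegrand q p δ u a c) :=
  ((measurable_Jq q).comp (measurable_const.sub hu)).div (by fun_prop) |>.indicator
    (measurableSet_le measurable_const (by fun_prop))

variable (μ : Measure E)

lemma integrableOn_tail_of_integrable_tailIntegrand [μ.IsAddLeftInvariant] {a : E} {c : ℝ}
    (h : Integrable (tailIntegrand q p δ u a c) μ) :
    IntegrableOn (fun z => Jq q (c - u (a + z)) / ‖z‖ ^ p) {z : E | δ ≤ ‖z‖} μ := by
  rw [← integrable_indicator_iff (measurableSet_le measurable_const measurable_norm),
    indicator_tail_eq_tailIntegrand_add]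
  exact h.comp_add_left a

lemma setIntegral_tail_eq_integral_tailIntegrand [μ.IsAddLeftInvariant] (a : E) (c : ℝ) :
    ∫ z in {z : E | δ ≤ ‖z‖}, Jq q (c - u (a + z)) / ‖z‖ ^ p ∂μ =
      ∫ y, tailIntegrand q p δ u a c y ∂μ := by
  rw [← integral_indicator (measurableSet_le measurable_const measurable_norm),
    indicator_tail_eq_tailIntegrand_add, integral_add_left_eq_self]

variable [NormedSpace ℝ E] [FiniteDimensional ℝ E] [μ.IsAddHaarMeasure]

lemma integrable_inv_one_add_norm_rpow (hp : (Module.finrank ℝ E : ℝ) < p) :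
    Integrable (fun y : E => (1 + ‖y‖ ^ p)⁻¹) μ := by
  have hp0 : 0 ≤ p := (Nat.cast_nonneg _).trans hp.le
  refine ((integrable_one_add_norm hp).const_mul (2 ^ p)).mono' (by fun_prop)
    (ae_of_all _ fun y => ?_)
  have h := Real.add_rpow_le_two_rpow_mul_rpow_add_rpow zero_le_one (norm_nonneg y) hp0
  rw [Real.one_rpow] at h
  rw [Real.norm_eq_abs, abs_of_pos (by positivity), Real.rpow_neg (by positivity),
    ← div_eq_mul_inv, le_div_iff₀ (by positivity), inv_mul_le_iff₀ (by positivity)]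
  linarith

lemma integrable_tail_majorant (hp : (Module.finrank ℝ E : ℝ) < p)
    (htail : Integrable (fun y => |u y| ^ (q - 1) / (1 + ‖y‖ ^ p)) μ) (K B : ℝ) :
    Integrable (fun y => K * (B ^ (q - 1) * (1 + ‖y‖ ^ p)⁻¹ + |u y| ^ (q - 1) / (1 + ‖y‖ ^ p)))
      μ :=
  (((integrable_inv_one_add_norm_rpow μ hp).const_mul _).add htail).const_mul K

lemma integrable_tailIntegrand (hq : 1 < q) (hp : (Module.finrank ℝ E : ℝ) < p) (hδ : 0 < δ)
    (hu : Measurable u) (htail : Integrable (fun y => |u y| ^ (q - 1) / (1 + ‖y‖ ^ p)) μ)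
    (a : E) (c : ℝ) : Integrable (tailIntegrand q p δ u a c) μ :=
  (integrable_tail_majorant μ hp htail _ _).mono'
    (measurable_tailIntegrand hu a c).aestronglyMeasurable
    (ae_of_all _ (norm_tailIntegrand_le hq ((Nat.cast_nonneg _).trans hp.le) hδ le_rfl le_rfl))

theorem tendsto_integral_tailIntegrand {ι : Type*} {l : Filter ι} [l.IsCountablyGenerated]
    (hq : 1 < q) (hp : (Module.finrank ℝ E : ℝ) < p) (hδ : 0 < δ) (hu : Measurable u)
    (htail : Integrable (fun y => |u y| ^ (q - 1) / (1 + ‖y‖ ^ p)) μ) {a : ι → E} {a₀ : E}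
    {c : ι → ℝ} {c₀ : ℝ} (ha : Tendsto a l (𝓝 a₀)) (hc : Tendsto c l (𝓝 c₀)) :
    Tendsto (fun i => ∫ y, tailIntegrand q p δ u (a i) (c i) y ∂μ) l
      (𝓝 (∫ y, tailIntegrand q p δ u a₀ c₀ y ∂μ)) := by
  have h_sphere : ∀ᵐ y ∂μ, ‖y - a₀‖ ≠ δ :=
    ae_iff.2 <| measure_mono_null (fun y hy => by simpa [dist_eq_norm] using hy)
      (Measure.addHaar_sphere_of_ne_zero μ a₀ hδ.ne')
  refine tendsto_integral_filter_of_dominated_convergence _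
    (.of_forall fun i => (measurable_tailIntegrand hu _ _).aestronglyMeasurable) ?_
    (integrable_tail_majorant μ hp htail (2 ^ (q - 1) * (δ ^ (-p) + (1 + (‖a₀‖ + 1) / δ) ^ p))
      (|c₀| + 1)) ?_
  · filter_upwards [ha.norm.eventually_lt_const (lt_add_one ‖a₀‖),
      hc.abs.eventually_lt_const (lt_add_one |c₀|)] with i hai hci
    exact ae_of_all _ (norm_tailIntegrand_le hq ((Nat.cast_nonneg _).trans hp.le) hδ hai.le hci.le)
  · filter_upwards [h_sphere] with y hy using tendsto_tailIntegrand hq hδ.le ha hc hy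

end Tail

theorem tail_integral_continuity_general
    (n : ℕ) (q s δ₁ : ℝ)
    (hq : 1 < q) (hs : s ∈ Set.Ioo (0 : ℝ) 1) (hδ₁ : 0 < δ₁)
    (u : EuclideanSpace ℝ (Fin n) → ℝ) (hmeas : Measurable u)
    (htail : Integrable (fun y : EuclideanSpace ℝ (Fin n) =>
        |u y| ^ (q - 1) / (1 + ‖y‖ ^ ((n : ℝ) + s * q))))
    (x : ℕ → EuclideanSpace ℝ (Fin n)) (xbar : EuclideanSpace ℝ (Fin n))
    (hx : Tendsto x atTop (𝓝 xbar))
    (hux : Tendsto (fun k => u (x k)) atTop (𝓝 (u xbar))) :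
    (∀ k, IntegrableOn
        (fun z => Jq q (u (x k) - u (x k + z)) / ‖z‖ ^ ((n : ℝ) + s * q))
        {z : EuclideanSpace ℝ (Fin n) | δ₁ ≤ ‖z‖}) ∧
    IntegrableOn
        (fun z => Jq q (u xbar - u (xbar + z)) / ‖z‖ ^ ((n : ℝ) + s * q))
        {z : EuclideanSpace ℝ (Fin n) | δ₁ ≤ ‖z‖} ∧
    Tendsto (fun k =>
        ∫ z in {z : EuclideanSpace ℝ (Fin n) | δ₁ ≤ ‖z‖},
          Jq q (u (x k) - u (x k + z)) / ‖z‖ ^ ((n : ℝ) + s * q))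
      atTop
      (𝓝 (∫ z in {z : EuclideanSpace ℝ (Fin n) | δ₁ ≤ ‖z‖},
          Jq q (u xbar - u (xbar + z)) / ‖z‖ ^ ((n : ℝ) + s * q))) := by
  have hp : (Module.finrank ℝ (EuclideanSpace ℝ (Fin n)) : ℝ) < n + s * q := by
    rw [finrank_euclideanSpace_fin]
    linarith [mul_pos hs.1 (zero_lt_one.trans hq)]
  have h_int := integrable_tailIntegrand volume hq hp hδ₁ hmeas htail
  simp only [setIntegral_tail_eq_integral_tailIntegrand]
  exact ⟨fun k => integrableOn_tail_of_integrable_tailIntegrand _ (h_int _ _),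
    integrableOn_tail_of_integrable_tailIntegrand _ (h_int _ _),
    tendsto_integral_tailIntegrand volume hq hp hδ₁ hmeas htail hx hux⟩

/-- **Lemma 2.5** (continuity of tail integrals along sequences). -/
theorem tail_integral_continuity
    (n : ℕ) (hn : 1 ≤ n) (q s δ₁ : ℝ)
    (hq : 1 < q) (hs : s ∈ Set.Ioo (0 : ℝ) 1) (hδ₁ : 0 < δ₁)
    (u : EuclideanSpace ℝ (Fin n) → ℝ) (hmeas : Measurable u)
    (htail : Integrable (fun y : EuclideanSpace ℝ (Fin n) =>
        |u y| ^ (q - 1) / (1 + ‖y‖ ^ ((n : ℝ) + s * q))))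
    (x : ℕ → EuclideanSpace ℝ (Fin n)) (xbar : EuclideanSpace ℝ (Fin n))
    (hx : Tendsto x atTop (𝓝 xbar))
    (hux : Tendsto (fun k => u (x k)) atTop (𝓝 (u xbar))) :
    (∀ k, IntegrableOn
        (fun z => Jq q (u (x k) - u (x k + z)) / ‖z‖ ^ ((n : ℝ) + s * q))
        {z : EuclideanSpace ℝ (Fin n) | δ₁ ≤ ‖z‖}) ∧
    IntegrableOn
        (fun z => Jq q (u xbar - u (xbar + z)) / ‖z‖ ^ ((n : ℝ) + s * q))
        {z : EuclideanSpace ℝ (Fin n) | δ₁ ≤ ‖z‖} ∧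
    Tendsto (fun k =>
        ∫ z in {z : EuclideanSpace ℝ (Fin n) | δ₁ ≤ ‖z‖},
          Jq q (u (x k) - u (x k + z)) / ‖z‖ ^ ((n : ℝ) + s * q))
      atTop
      (𝓝 (∫ z in {z : EuclideanSpace ℝ (Fin n) | δ₁ ≤ ‖z‖},
          Jq q (u xbar - u (xbar + z)) / ‖z‖ ^ ((n : ℝ) + s * q))) :=
  tail_integral_continuity_general n q s δ₁ hq hs hδ₁ u hmeas htail x xbar hx hux
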